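/- arXiv:2407.20526 — 2 statements merged into one kernel-verified Lean document; each statement's English description precedes it below -/
import Mathlib

section
/- Let H_1 (r_1×n_1) and H_2 (r_2×n_2) be matrices over F_2 and H_X = (H_1 ⊗ I_{n_2} | I_{r_1} ⊗ H_2^T). Let b̄ ∈ ker applied to the transpose: H_2^T·b̄ = 0 with b̄ ∈ F_2^{r_2}, and let β ∈ {1,...,r_1}. Then the energy barrier of L = (0, e_β ⊗ b̄) with respect to H_X satisfies Δ_{H_X}(L) ≤ Δ_{H_2^T}(b̄). -/
open Matrix Kronecker

/-- Hamming weight of a vector over `ZMod 2`. -/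
def wt {α : Type*} [Fintype α] (v : α → ZMod 2) : ℕ :=
  (Finset.univ.filter fun i => v i ≠ 0).card

/-- Number of nonzero entries of a matrix over `ZMod 2`. -/
def mwt {α β : Type*} [Fintype α] [Fintype β] (M : Matrix α β (ZMod 2)) : ℕ :=
  (Finset.univ.filter fun p : α × β => M p.1 p.2 ≠ 0).card

/-- Energy barrier of a vector `s` w.r.t. parity check matrix `H`: the minimum over
single-bit-flip paths from `0` to `s` of the maximum energy `wt (H·v)` along the path. -/
noncomputable def eb {α β : Type*} [Fintype α] [Fintype β] (H : Matrix α β (ZMod 2)) (s : β → ZMod 2) : ℕ :=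
  sInf {B | ∃ F : ℕ, ∃ v : Fin (F + 1) → β → ZMod 2,
    v 0 = 0 ∧ v (Fin.last F) = s ∧
    (∀ i : Fin F, wt (v i.castSucc + v i.succ) ≤ 1) ∧
    ∀ i, wt (H.mulVec (v i)) ≤ B}

/-- Energy barrier of a classical code: minimum of `eb` over nonzero codewords. -/
noncomputable def codeEB {α β : Type*} [Fintype α] [Fintype β] (M : Matrix α β (ZMod 2)) : ℕ :=
  sInf {E | ∃ c, c ≠ 0 ∧ M.mulVec c = 0 ∧ eb M c = E}


/-- The X-type parity check matrix of the hypergraph product code. -/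
def HX {r1 n1 r2 n2 : ℕ} (H1 : Matrix (Fin r1) (Fin n1) (ZMod 2))
    (H2 : Matrix (Fin r2) (Fin n2) (ZMod 2)) :
    Matrix (Fin r1 × Fin n2) ((Fin n1 × Fin n2) ⊕ (Fin r1 × Fin r2)) (ZMod 2) :=
  Matrix.fromCols (H1 ⊗ₖ (1 : Matrix (Fin n2) (Fin n2) (ZMod 2)))
    ((1 : Matrix (Fin r1) (Fin r1) (ZMod 2)) ⊗ₖ H2ᵀ)


/-!
Tensoring with `e_β` is an additive, weight-preserving embedding of `F_2^{r_2}` into the second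
block of `H_X`'s columns, and `H_X (0, e_β ⊗ b) = e_β ⊗ H_2ᵀ b`. So it carries every single-flip
path from `0` to `b̄` to a single-flip path from `0` to `L` with the same energies.
-/

section Weight

variable {ι κ : Type*}

lemma wt_le_card [Fintype ι] (v : ι → ZMod 2) : wt v ≤ Fintype.card ι :=
  Finset.card_filter_le _ _

lemma wt_sumElim_zero [Fintype ι] [Fintype κ] (u : κ → ZMod 2) :
    wt (Sum.elim (0 : ι → ZMod 2) u) = wt u := by
  unfold wt
  conv_rhs => rw [← Finset.card_map (Function.Embedding.inr (α := ι))]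
  congr 1
  ext (i | k) <;> simp

/-- The vector `e_i ⊗ w`. -/
def singleTensor {R : Type*} [Zero R] [DecidableEq ι] (i : ι) (w : κ → R) : ι × κ → R :=
  fun p => if p.1 = i then w p.2 else 0

variable [DecidableEq ι]

lemma singleTensor_add (i : ι) (x y : κ → ZMod 2) :
    singleTensor i (x + y) = singleTensor i x + singleTensor i y := by
  ext ⟨j, k⟩
  by_cases h : j = i <;> simp [singleTensor, h]

lemma wt_singleTensor [Fintype ι] [Fintype κ] (i : ι) (w : κ → ZMod 2) :
    wt (singleTensor i w) = wt w := by
  unfold wt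
  conv_rhs => rw [← Finset.card_map (Function.Embedding.sectR i κ)]
  congr 1
  ext ⟨j, k⟩
  by_cases h : j = i <;> simp [singleTensor, h, Ne.symm]

lemma one_kronecker_mulVec_singleTensor [Fintype ι] [Fintype κ] {R κ' : Type*} [Semiring R]
    (B : Matrix κ' κ R) (i : ι) (w : κ → R) :
    ((1 : Matrix ι ι R) ⊗ₖ B) *ᵥ singleTensor i w = singleTensor i (B *ᵥ w) := by
  ext ⟨j, k⟩
  simp [singleTensor, Matrix.mulVec, dotProduct, Fintype.sum_prod_type, Matrix.one_apply, ite_mul]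

end Weight

lemma HX_mulVec_singleTensor {r1 n1 r2 n2 : ℕ} (H1 : Matrix (Fin r1) (Fin n1) (ZMod 2))
    (H2 : Matrix (Fin r2) (Fin n2) (ZMod 2)) (β : Fin r1) (w : Fin r2 → ZMod 2) :
    HX H1 H2 *ᵥ Sum.elim 0 (singleTensor β w) = singleTensor β (H2ᵀ *ᵥ w) := by
  rw [HX, fromCols_mulVec_sumElim, mulVec_zero, zero_add, one_kronecker_mulVec_singleTensor]

section EnergyBarrier

variable {α β : Type*} [Fintype α] [Fintype β]

lemma exists_flip_path (s : β → ZMod 2) :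
    ∃ F : ℕ, ∃ v : Fin (F + 1) → β → ZMod 2, v 0 = 0 ∧ v (Fin.last F) = s ∧
      ∀ i : Fin F, wt (v i.castSucc + v i.succ) ≤ 1 := by
  let e := Fintype.equivFin β
  refine ⟨Fintype.card β, fun k j => if (e j : ℕ) < k then s j else 0, ?_, ?_, ?_⟩
  · ext j; simp
  · ext j; simp
  · intro k
    refine (Finset.card_le_card fun j hj => ?_).trans (Finset.card_singleton (e.symm k)).le
    simp only [Finset.mem_filter, Finset.mem_univ, true_and, Pi.add_apply] at hj
    rw [Finset.mem_singleton, e.eq_symm_apply]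
    by_contra hne
    have hne' : (e j : ℕ) ≠ k := fun h => hne (Fin.ext h)
    have hiff : (e j : ℕ) < k ↔ (e j : ℕ) < k + 1 := by omega
    simp [hiff, CharTwo.add_self_eq_zero] at hj

lemma eb_le_of_path (H : Matrix α β (ZMod 2)) {s : β → ZMod 2} {B F : ℕ}
    {v : Fin (F + 1) → β → ZMod 2} (h0 : v 0 = 0) (hlast : v (Fin.last F) = s)
    (hflip : ∀ i : Fin F, wt (v i.castSucc + v i.succ) ≤ 1) (henergy : ∀ i, wt (H *ᵥ v i) ≤ B) :
    eb H s ≤ B :=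
  Nat.sInf_le ⟨F, v, h0, hlast, hflip, henergy⟩

lemma eb_mem (H : Matrix α β (ZMod 2)) (s : β → ZMod 2) :
    eb H s ∈ {B | ∃ F : ℕ, ∃ v : Fin (F + 1) → β → ZMod 2, v 0 = 0 ∧ v (Fin.last F) = s ∧
      (∀ i : Fin F, wt (v i.castSucc + v i.succ) ≤ 1) ∧ ∀ i, wt (H *ᵥ v i) ≤ B} :=
  have ⟨F, v, h0, hlast, hflip⟩ := exists_flip_path s
  Nat.sInf_mem ⟨Fintype.card α, F, v, h0, hlast, hflip, fun _ => wt_le_card _⟩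

theorem eb_map_le {α' β' : Type*} [Fintype α'] [Fintype β'] (H : Matrix α β (ZMod 2))
    (H' : Matrix α' β' (ZMod 2)) (f : (β → ZMod 2) →+ (β' → ZMod 2))
    (hwt : ∀ x, wt (f x) ≤ wt x) (henergy : ∀ x, wt (H' *ᵥ f x) ≤ wt (H *ᵥ x))
    (s : β → ZMod 2) : eb H' (f s) ≤ eb H s := by
  obtain ⟨F, v, h0, hlast, hflip, hv⟩ := eb_mem H s
  refine eb_le_of_path H' (v := f ∘ v) (by simp [h0]) (by simp [hlast]) (fun i => ?_)
    (fun i => (henergy _).trans (hv i))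
  simpa only [Function.comp, ← map_add] using (hwt _).trans (hflip i)

end EnergyBarrier

theorem stmt11_general {r1 n1 r2 n2 : ℕ}
    (H1 : Matrix (Fin r1) (Fin n1) (ZMod 2)) (H2 : Matrix (Fin r2) (Fin n2) (ZMod 2))
    (bbar : Fin r2 → ZMod 2) (β : Fin r1) :
    eb (HX H1 H2)
      (Sum.elim (0 : Fin n1 × Fin n2 → ZMod 2)
        (fun p : Fin r1 × Fin r2 => if p.1 = β then bbar p.2 else 0)) ≤ eb H2ᵀ bbar := by
  let embed : (Fin r2 → ZMod 2) →+ _ := AddMonoidHom.mk'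
    (fun w => Sum.elim (0 : Fin n1 × Fin n2 → ZMod 2) (singleTensor β w))
    (fun x y => by rw [singleTensor_add, ← Sum.elim_add_add, add_zero])
  refine eb_map_le H2ᵀ (HX H1 H2) embed (fun w => ?_) (fun w => ?_) bbar
  · rw [AddMonoidHom.mk'_apply, wt_sumElim_zero, wt_singleTensor]
  · rw [AddMonoidHom.mk'_apply, HX_mulVec_singleTensor, wt_singleTensor]

theorem stmt11 {r1 n1 r2 n2 : ℕ}
    (H1 : Matrix (Fin r1) (Fin n1) (ZMod 2)) (H2 : Matrix (Fin r2) (Fin n2) (ZMod 2))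
    (bbar : Fin r2 → ZMod 2) (hb : H2ᵀ.mulVec bbar = 0) (β : Fin r1) :
    eb (HX H1 H2)
      (Sum.elim (0 : Fin n1 × Fin n2 → ZMod 2)
        (fun p : Fin r1 × Fin r2 => if p.1 = β then bbar p.2 else 0)) ≤ eb H2ᵀ bbar :=
  stmt11_general H1 H2 bbar β
end

section
/- Let H_1 (r_1×n_1), H_2 (r_2×n_2) be matrices over F_2 and H_X = (H_1 ⊗ I_{n_2} | I_{r_1} ⊗ H_2^T). Fix a codeword L_c ∈ ker(H_2) and α in the support of L_c. Define the deformation map D : F_2^{n_1 n_2 + r_1 r_2} → F_2^{n_1 n_2 + r_1 r_2} by D(z^{(1)}, z^{(2)}) = (Z^{(1)}·L_c ⊗ e_α viewed as the vector supported on column α, 0), where Z^{(1)} is the n_1×n_2 reshaping of z^{(1)}. Then for every z, wt(H_X·D(z)) ≤ wt(H_X·z), and for any two vectors z, z' differing in at most one coordinate, D(z) and D(z') differ in at most one coordinate. -/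
open Matrix Kronecker

/-- The deformation map sending `z` to the vector supported on column `α` of the first
block whose column-`α` entries are the sum of the columns of `Z^{(1)}` in the support of `Lc`. -/
def deform {n1 n2 r1 r2 : ℕ} (Lc : Fin n2 → ZMod 2) (α : Fin n2)
    (z : (Fin n1 × Fin n2) ⊕ (Fin r1 × Fin r2) → ZMod 2) :
    (Fin n1 × Fin n2) ⊕ (Fin r1 × Fin r2) → ZMod 2 :=
  Sum.elim (fun p => if p.2 = α then ∑ j, z (Sum.inl (p.1, j)) * Lc j else 0) 0

/-!
Reshape `z = (z₁, z₂)` into matrices `Z₁ : n₁ × n₂` and `Z₂ : r₁ × r₂`. Then `H_X z` reshapes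
to `H₁ Z₁ + Z₂ H₂` and `D z` to `(Z₁ L_c) e_αᵀ`, so `H_X (D z)` reshapes to
`(H₁ Z₁) L_c e_αᵀ = (H₁ Z₁ + Z₂ H₂) L_c e_αᵀ`, using `H₂ L_c = 0`. A matrix `(M L_c) e_αᵀ` has
at most as many nonzero entries as `M` has nonzero rows, which gives the energy bound. The same
count applied to `Z₁`, together with the linearity of `D`, shows that `D` does not increase
distances.
-/

section Weight

variable {ι κ : Type*} [Fintype ι] [Fintype κ]

theorem wt_zero : wt (0 : ι → ZMod 2) = 0 := by
  simp [wt]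

theorem wt_sumElim (a : ι → ZMod 2) (b : κ → ZMod 2) : wt (Sum.elim a b) = wt a + wt b := by
  simp only [wt, Finset.card_filter, Fintype.sum_sum_type, Sum.elim_inl, Sum.elim_inr]
  rfl

theorem wt_comp_inl_le (v : ι ⊕ κ → ZMod 2) : wt (v ∘ Sum.inl) ≤ wt v := by
  conv_rhs => rw [← Sum.elim_comp_inl_inr v, wt_sumElim]
  exact Nat.le_add_right _ _

theorem wt_mulVec_le_mwt (M : Matrix ι κ (ZMod 2)) (v : κ → ZMod 2) : wt (M *ᵥ v) ≤ mwt M := by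
  refine Finset.card_le_card_of_surjOn Prod.fst fun i hi => ?_
  simp only [Finset.mem_coe, Finset.mem_filter_univ, mulVec, dotProduct] at hi
  obtain ⟨j, -, hj⟩ := Finset.exists_ne_zero_of_sum_ne_zero hi
  exact ⟨(i, j), by simpa using left_ne_zero_of_mul hj, rfl⟩

theorem mwt_vecMulVec_single_le [DecidableEq κ] (u : ι → ZMod 2) (α : κ) :
    mwt (vecMulVec u (Pi.single α 1)) ≤ wt u := by
  refine Finset.card_le_card_of_surjOn (fun i => (i, α)) ?_
  rintro ⟨i, k⟩ hik
  simp only [Finset.mem_coe, vecMulVec_apply] at hik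
  obtain rfl : k = α := by
    by_contra hk
    simp [Pi.single_eq_of_ne hk] at hik
  exact ⟨i, by simpa using hik, rfl⟩

end Weight

def reshape {m n R : Type*} (v : m × n → R) : Matrix m n R :=
  Matrix.of (Function.curry v)

section Reshape

variable {l m n k R : Type*}

theorem wt_eq_mwt_reshape [Fintype m] [Fintype n] (v : m × n → ZMod 2) :
    wt v = mwt (reshape v) :=
  rfl

@[simp]
theorem reshape_apply_fst_snd (M : Matrix m n R) : reshape (fun p : m × n => M p.1 p.2) = M :=
  rfl

@[simp]
theorem reshape_add [Add R] (v w : m × n → R) : reshape (v + w) = reshape v + reshape w :=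
  rfl

@[simp]
theorem reshape_zero [Zero R] : reshape (0 : m × n → R) = 0 :=
  rfl

variable [CommSemiring R]

theorem reshape_kronecker_one_mulVec [Fintype m] [Fintype n] [DecidableEq n] (A : Matrix l m R)
    (v : m × n → R) :
    reshape ((A ⊗ₖ (1 : Matrix n n R)) *ᵥ v) = A * reshape v := by
  ext i j
  simp [reshape, mulVec, dotProduct, mul_apply, Fintype.sum_prod_type, one_apply]

theorem reshape_one_kronecker_transpose_mulVec [Fintype l] [Fintype k] [DecidableEq l]
    (B : Matrix k n R) (v : l × k → R) :
    reshape (((1 : Matrix l l R) ⊗ₖ Bᵀ) *ᵥ v) = reshape v * B := by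
  ext i j
  simp [reshape, mulVec, dotProduct, mul_apply, Fintype.sum_prod_type, one_apply, mul_comm]

end Reshape

section HypergraphProduct

variable {r1 n1 r2 n2 : ℕ}

theorem reshape_HX_mulVec (H1 : Matrix (Fin r1) (Fin n1) (ZMod 2))
    (H2 : Matrix (Fin r2) (Fin n2) (ZMod 2)) (z1 : Fin n1 × Fin n2 → ZMod 2)
    (z2 : Fin r1 × Fin r2 → ZMod 2) :
    reshape (HX H1 H2 *ᵥ Sum.elim z1 z2) = H1 * reshape z1 + reshape z2 * H2 := by
  rw [HX, fromCols_mulVec_sumElim, reshape_add, reshape_kronecker_one_mulVec,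
    reshape_one_kronecker_transpose_mulVec]

variable (Lc : Fin n2 → ZMod 2) (α : Fin n2)

theorem deform_eq (z : (Fin n1 × Fin n2) ⊕ (Fin r1 × Fin r2) → ZMod 2) :
    deform Lc α z =
      Sum.elim (fun p => vecMulVec (reshape (z ∘ Sum.inl) *ᵥ Lc) (Pi.single α 1) p.1 p.2) 0 := by
  funext p
  rcases p with ⟨a, j⟩ | _
  · by_cases hj : j = α
    · subst hj
      simp [deform, reshape, mulVec, dotProduct, vecMulVec_apply]
    · simp [deform, hj, vecMulVec_apply]
  · rfl

theorem deform_add (z z' : (Fin n1 × Fin n2) ⊕ (Fin r1 × Fin r2) → ZMod 2) :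
    deform Lc α (z + z') = deform Lc α z + deform Lc α z' := by
  funext p
  rcases p with ⟨a, j⟩ | _
  · simp only [deform, Sum.elim_inl, Pi.add_apply]
    split_ifs
    · simp only [add_mul, Finset.sum_add_distrib]
    · rw [add_zero]
  · simp [deform]

theorem wt_deform_le (z : (Fin n1 × Fin n2) ⊕ (Fin r1 × Fin r2) → ZMod 2) :
    wt (deform Lc α z) ≤ wt z :=
  calc wt (deform Lc α z)
      = mwt (vecMulVec (reshape (z ∘ Sum.inl) *ᵥ Lc) (Pi.single α 1)) := by
        rw [deform_eq, wt_sumElim, wt_zero, add_zero]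
        rfl
    _ ≤ wt (reshape (z ∘ Sum.inl) *ᵥ Lc) := mwt_vecMulVec_single_le _ _
    _ ≤ wt (z ∘ Sum.inl) := wt_mulVec_le_mwt _ _
    _ ≤ wt z := wt_comp_inl_le z

theorem wt_HX_mulVec_deform_le (H1 : Matrix (Fin r1) (Fin n1) (ZMod 2))
    (H2 : Matrix (Fin r2) (Fin n2) (ZMod 2)) (hLc : H2 *ᵥ Lc = 0)
    (z : (Fin n1 × Fin n2) ⊕ (Fin r1 × Fin r2) → ZMod 2) :
    wt (HX H1 H2 *ᵥ deform Lc α z) ≤ wt (HX H1 H2 *ᵥ z) := by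
  set Z1 := reshape (z ∘ Sum.inl)
  set Z2 := reshape (z ∘ Sum.inr)
  calc wt (HX H1 H2 *ᵥ deform Lc α z)
      = mwt (vecMulVec ((H1 * Z1 + Z2 * H2) *ᵥ Lc) (Pi.single α 1)) := by
        rw [wt_eq_mwt_reshape, deform_eq, reshape_HX_mulVec, reshape_apply_fst_snd, reshape_zero,
          Matrix.zero_mul, add_zero, mul_vecMulVec, add_mulVec, ← mulVec_mulVec,
          ← mulVec_mulVec, hLc, mulVec_zero, add_zero]
    _ ≤ wt ((H1 * Z1 + Z2 * H2) *ᵥ Lc) := mwt_vecMulVec_single_le _ _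
    _ ≤ mwt (H1 * Z1 + Z2 * H2) := wt_mulVec_le_mwt _ _
    _ = wt (HX H1 H2 *ᵥ z) := by
      rw [wt_eq_mwt_reshape, ← Sum.elim_comp_inl_inr z, reshape_HX_mulVec]

end HypergraphProduct

theorem stmt12_general {r1 n1 r2 n2 : ℕ}
    (H1 : Matrix (Fin r1) (Fin n1) (ZMod 2)) (H2 : Matrix (Fin r2) (Fin n2) (ZMod 2))
    (Lc : Fin n2 → ZMod 2) (hLc : H2.mulVec Lc = 0) (α : Fin n2) :
    (∀ z : (Fin n1 × Fin n2) ⊕ (Fin r1 × Fin r2) → ZMod 2,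
      wt ((HX H1 H2).mulVec (deform Lc α z)) ≤ wt ((HX H1 H2).mulVec z)) ∧
    (∀ z z' : (Fin n1 × Fin n2) ⊕ (Fin r1 × Fin r2) → ZMod 2,
      wt (z + z') ≤ 1 → wt (deform Lc α z + deform Lc α z') ≤ 1) :=
  ⟨wt_HX_mulVec_deform_le Lc α H1 H2 hLc, fun z z' h =>
    deform_add Lc α z z' ▸ (wt_deform_le Lc α (z + z')).trans h⟩

theorem stmt12 {r1 n1 r2 n2 : ℕ}
    (H1 : Matrix (Fin r1) (Fin n1) (ZMod 2)) (H2 : Matrix (Fin r2) (Fin n2) (ZMod 2))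
    (Lc : Fin n2 → ZMod 2) (hLc : H2.mulVec Lc = 0) (α : Fin n2) (hα : Lc α = 1) :
    (∀ z : (Fin n1 × Fin n2) ⊕ (Fin r1 × Fin r2) → ZMod 2,
      wt ((HX H1 H2).mulVec (deform Lc α z)) ≤ wt ((HX H1 H2).mulVec z)) ∧
    (∀ z z' : (Fin n1 × Fin n2) ⊕ (Fin r1 × Fin r2) → ZMod 2,
      wt (z + z') ≤ 1 → wt (deform Lc α z + deform Lc α z') ≤ 1) :=
  stmt12_general H1 H2 Lc hLc α
end
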